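/- arXiv:1305.6287 — 7 statements merged into one kernel-verified Lean document; each statement's English description precedes it below -/
import Mathlib

section
/- For every positive integer n, the intersection graph of ideals of Z/nZ is weakly perfect: its chromatic number equals its clique number. -/
/-- The intersection graph of ideals of a ring: vertices are the proper
non-trivial ideals, two distinct ideals are adjacent iff their intersection
is non-zero. -/
def interGraph (R : Type*) [CommRing R] : SimpleGraph {I : Ideal R // I ≠ ⊥ ∧ I ≠ ⊤} where
  Adj I J := I ≠ J ∧ I.1 ⊓ J.1 ≠ ⊥
  symm := ⟨by rintro I J ⟨h1, h2⟩; exact ⟨h1.symm, by rwa [inf_comm]⟩⟩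
  loopless := ⟨by rintro I ⟨h, -⟩; exact h rfl⟩

/-- Degree of a vertex. -/
noncomputable def vdeg {V : Type*} (G : SimpleGraph V) (v : V) : ℕ :=
  Nat.card {w // G.Adj v w}

/-- Maximum degree. -/
noncomputable def maxDeg {V : Type*} (G : SimpleGraph V) : ℕ := ⨆ v, vdeg G v

/-- Edge chromatic number (chromatic index), as the chromatic number of the line graph. -/
noncomputable def edgeChrom {V : Type*} (G : SimpleGraph V) : ℕ∞ :=
  (SimpleGraph.lineGraph G).chromaticNumber

/-- The intersection graph of non-empty proper subsets of `Fin m`. -/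
def subsetGraph (m : ℕ) : SimpleGraph {S : Finset (Fin m) // S ≠ ∅ ∧ S ≠ Finset.univ} where
  Adj S T := S ≠ T ∧ (S.1 ∩ T.1).Nonempty
  symm := ⟨by rintro S T ⟨h1, h2⟩; exact ⟨h1.symm, by rwa [Finset.inter_comm]⟩⟩
  loopless := ⟨by rintro S ⟨h, -⟩; exact h rfl⟩

/-!
Record an ideal `I` of `ZMod n` by the set `τ I` of primes `p ∣ n` whose minimal ideal `(n / p)`
lies in `I`; two ideals meet non-trivially iff their sets meet, so only the type `τ I` matters
for adjacency. Pair each non-empty `T ⊆ P` (the primes of `n`) with `P \ T` and call the half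
carrying more ideals heavy. Deleting the `q`-part of a generator injects the ideals of type `S`
into those of type `insert q S`, so the number of ideals of a type grows with the type below `P`;
hence two heavy types always meet and the ideals of heavy type form a clique. Sending the ideals
of each light type injectively to ideals of the complementary heavy type colours the graph with
that clique, because ideals of complementary types are never adjacent.
-/

namespace Finset

variable {α β V : Type*} [DecidableEq α]

theorem monotoneOn_Iio_of_le_insert [Preorder β] {c : Finset α → β} {P : Finset α}
    (h : ∀ S q, q ∉ S → insert q S < P → c S ≤ c (insert q S)) :
    MonotoneOn c (Set.Iio P) := by
  intro S _ S' hS' hSS'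
  obtain ⟨t, rfl⟩ : ∃ t, S' = S ∪ t := ⟨S' \ S, (union_sdiff_of_subset hSS').symm⟩
  clear hSS'
  induction t using Finset.induction_on with
  | empty => simp
  | insert q t _ ih =>
    rw [Set.mem_Iio, union_insert] at hS'
    have ht : S ∪ t < P := (subset_insert q (S ∪ t)).trans_lt hS'
    rw [union_insert]
    by_cases hq : q ∈ S ∪ t
    · rw [insert_eq_of_mem hq]
      exact ih ht
    · exact (ih ht).trans (h _ _ hq hS')

/-- `T` is the heavier of the two halves `T` and `P \ T` for the weight `c`; a tie goes to the half
containing `a`. -/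
def IsHeavyHalf [LinearOrder β] (c : Finset α → β) (P : Finset α) (a : α) (T : Finset α) : Prop :=
  c (P \ T) < c T ∨ c (P \ T) = c T ∧ a ∈ T

variable [LinearOrder β] {c : Finset α → β} {P T T' : Finset α} {a : α}

theorem IsHeavyHalf.sdiff_of_not (hT : T ⊆ P) (ha : a ∈ P) (h : ¬IsHeavyHalf c P a T) :
    IsHeavyHalf c P a (P \ T) ∧ c T ≤ c (P \ T) := by
  unfold IsHeavyHalf at h ⊢
  rw [sdiff_sdiff_eq_self hT]
  push Not at h
  refine ⟨?_, h.1⟩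
  rcases h.1.lt_or_eq with hlt | heq
  · exact Or.inl hlt
  · exact Or.inr ⟨heq, mem_sdiff.2 ⟨ha, h.2 heq.symm⟩⟩

theorem IsHeavyHalf.not_disjoint (hc : MonotoneOn c (Set.Iio P)) (hT : T ⊆ P) (hT' : T' ⊆ P)
    (hTne : T.Nonempty) (hT'ne : T'.Nonempty) (hheavy : IsHeavyHalf c P a T)
    (hheavy' : IsHeavyHalf c P a T') : ¬Disjoint T T' := by
  intro hdisj
  have hsub : T' ⊆ P \ T := subset_sdiff.2 ⟨hT', hdisj.symm⟩
  have hsub' : T ⊆ P \ T' := subset_sdiff.2 ⟨hT, hdisj⟩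
  have hlt : P \ T < P := sdiff_ssubset hT hTne
  have hlt' : P \ T' < P := sdiff_ssubset hT' hT'ne
  have hle : c T' ≤ c (P \ T) := hc (hsub.trans_lt hlt) hlt hsub
  have hle' : c T ≤ c (P \ T') := hc (hsub'.trans_lt hlt') hlt' hsub'
  rcases hheavy with hheavy | ⟨heq, ha⟩
  · rcases hheavy' with hheavy' | ⟨heq', -⟩ <;> order
  · rcases hheavy' with hheavy' | ⟨-, ha'⟩
    · order
    · exact disjoint_left.1 hdisj ha ha'

theorem exists_map_isHeavyHalf [Finite V] [Nonempty V] {τ : V → Finset α} (hτ : ∀ v, τ v ⊆ P)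
    (ha : a ∈ P) :
    ∃ r : V → V, (∀ v, IsHeavyHalf (fun S => (τ ⁻¹' {S}).encard) P a (τ (r v))) ∧
      ∀ u v, r u = r v → u = v ∨ Disjoint (τ u) (τ v) := by
  classical
  set heavy := IsHeavyHalf (fun S => (τ ⁻¹' {S}).encard) P a
  have hf : ∀ T, ∃ f : V → V, T ⊆ P → ¬heavy T →
      Set.MapsTo f (τ ⁻¹' {T}) (τ ⁻¹' {P \ T}) ∧ Set.InjOn f (τ ⁻¹' {T}) := by
    intro T
    by_cases hT : T ⊆ P ∧ ¬heavy T
    · obtain ⟨f, hmaps, hinj⟩ := (Set.toFinite (τ ⁻¹' {T})).exists_injOn_of_encard_le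
        (IsHeavyHalf.sdiff_of_not hT.1 ha hT.2).2
      exact ⟨f, fun _ _ => ⟨hmaps, hinj⟩⟩
    · exact ⟨id, fun h h' => absurd ⟨h, h'⟩ hT⟩
  choose f hf using hf
  have hmaps : ∀ v, ¬heavy (τ v) → τ (f (τ v) v) = P \ τ v := fun v hv => (hf _ (hτ v) hv).1 rfl
  refine ⟨fun v => if heavy (τ v) then v else f (τ v) v, fun v => ?_, fun u v huv => ?_⟩
  · dsimp only
    split_ifs with hv
    · exact hv
    · rw [hmaps v hv]
      exact (IsHeavyHalf.sdiff_of_not (hτ v) ha hv).1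
  · by_cases hu : heavy (τ u) <;> by_cases hv : heavy (τ v) <;>
      simp only [hu, hv, if_true, if_false] at huv
    · exact Or.inl huv
    · rw [huv, hmaps v hv]
      exact Or.inr sdiff_disjoint
    · rw [← huv, hmaps u hu]
      exact Or.inr disjoint_sdiff
    · have hτuv : τ u = τ v := by
        rw [← sdiff_sdiff_eq_self (hτ u), ← sdiff_sdiff_eq_self (hτ v), ← hmaps u hu,
          ← hmaps v hv, huv]
      rw [hτuv] at huv
      exact Or.inl ((hf _ (hτ v) hv).2 hτuv rfl huv)

end Finset

namespace SimpleGraph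

variable {V α : Type*} {G : SimpleGraph V}

theorem chromaticNumber_eq_cliqueNum_of_coloring [Finite V] {K : Finset V} (hK : G.IsClique K)
    (C : G.Coloring K) : G.chromaticNumber = G.cliqueNum := by
  refine le_antisymm (C.colorable.chromaticNumber_le.trans ?_) G.cliqueNum_le_chromaticNumber
  rw [Fintype.card_coe]
  exact_mod_cast hK.card_le_cliqueNum

theorem chromaticNumber_eq_cliqueNum_of_adj_iff_not_disjoint [Finite V] [DecidableEq α]
    (P : Finset α) (τ : V → Finset α) (hτ : ∀ v, τ v ⊆ P) (hne : ∀ v, (τ v).Nonempty)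
    (hadj : ∀ u v, G.Adj u v ↔ u ≠ v ∧ ¬Disjoint (τ u) (τ v))
    (hmono : MonotoneOn (fun S => (τ ⁻¹' {S}).encard) (Set.Iio P)) :
    G.chromaticNumber = G.cliqueNum := by
  classical
  have := Fintype.ofFinite V
  rcases isEmpty_or_nonempty V with hV | hV
  · exact chromaticNumber_eq_cliqueNum_of_coloring (K := ∅) (by simp)
      (Coloring.mk isEmptyElim fun {v} => isEmptyElim v)
  obtain ⟨a, ha⟩ := hne (Classical.arbitrary V)
  obtain ⟨r, hr_heavy, hr⟩ := Finset.exists_map_isHeavyHalf hτ (hτ _ ha)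
  let K : Finset V := {v | Finset.IsHeavyHalf (fun S => (τ ⁻¹' {S}).encard) P a (τ v)}
  have hK : G.IsClique K := fun u hu v hv huv => (hadj u v).2 ⟨huv,
    Finset.IsHeavyHalf.not_disjoint hmono (hτ u) (hτ v) (hne u) (hne v)
      (by simpa [K] using hu) (by simpa [K] using hv)⟩
  refine chromaticNumber_eq_cliqueNum_of_coloring hK
    (Coloring.mk (fun v => ⟨r v, by simpa [K] using hr_heavy v⟩) fun {u v} huv hcol => ?_)
  rcases hr u v (congrArg Subtype.val hcol) with h | h
  exacts [((hadj u v).1 huv).1 h, ((hadj u v).1 huv).2 h]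

end SimpleGraph

theorem Nat.dvd_div_iff_factorization_lt {n d p : ℕ} (hn : n ≠ 0) (hd : d ∣ n)
    (hp : p ∈ n.primeFactors) : d ∣ n / p ↔ d.factorization p < n.factorization p := by
  have hp' := Nat.prime_of_mem_primeFactors hp
  have hd0 : d ≠ 0 := ne_zero_of_dvd_ne_zero hn hd
  rw [Nat.dvd_div_iff_mul_dvd (Nat.dvd_of_mem_primeFactors hp),
    ← Nat.factorization_le_iff_dvd (mul_ne_zero hp'.ne_zero hd0) hn,
    Nat.factorization_mul hp'.ne_zero hd0, hp'.factorization]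
  refine ⟨fun h => by simpa [Nat.one_add_le_iff] using h p, fun h q => ?_⟩
  rcases eq_or_ne p q with rfl | hpq
  · simpa [Nat.one_add_le_iff] using h
  · simpa [Finsupp.single_apply, hpq] using (Nat.factorization_le_iff_dvd hd0 hn).2 hd q

namespace ZMod

variable {n d : ℕ}

theorem comap_span_natCast (hd : d ∣ n) :
    (Ideal.span {(d : ZMod n)}).comap (Int.castRingHom (ZMod n)) = Ideal.span {(d : ℤ)} := by
  have hmap : Ideal.span {(d : ZMod n)} =
      (Ideal.span {(d : ℤ)}).map (Int.castRingHom (ZMod n)) := by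
    simp [Ideal.map_span]
  rw [hmap, Ideal.comap_map_of_surjective _ ZMod.intCast_surjective, ← RingHom.ker_eq_comap_bot,
    ZMod.ker_intCastRingHom, sup_eq_left, Ideal.span_singleton_le_span_singleton]
  exact_mod_cast hd

theorem natCast_mem_span_natCast_iff (hd : d ∣ n) {m : ℕ} :
    (m : ZMod n) ∈ Ideal.span {(d : ZMod n)} ↔ d ∣ m := by
  rw [← Int.cast_natCast (R := ZMod n) m, ← eq_intCast (Int.castRingHom (ZMod n)) (m : ℤ),
    ← Ideal.mem_comap, comap_span_natCast hd, Ideal.mem_span_singleton, Int.natCast_dvd_natCast]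

theorem exists_dvd_and_eq_span_natCast (I : Ideal (ZMod n)) :
    ∃ d, d ∣ n ∧ I = Ideal.span {(d : ZMod n)} := by
  obtain ⟨g, hg⟩ := Submodule.IsPrincipal.principal (I.comap (Int.castRingHom (ZMod n)))
  rw [Ideal.submodule_span_eq, ← Int.span_natAbs] at hg
  refine ⟨g.natAbs, ?_, ?_⟩
  · have hn : (n : ℤ) ∈ I.comap (Int.castRingHom (ZMod n)) := by simp
    rwa [hg, Ideal.mem_span_singleton, Int.natCast_dvd_natCast] at hn
  · rw [← Ideal.map_comap_of_surjective (Int.castRingHom (ZMod n)) ZMod.intCast_surjective I, hg,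
      Ideal.map_span]
    simp

theorem span_natCast_injOn :
    Set.InjOn (fun d : ℕ => Ideal.span {(d : ZMod n)}) {d | d ∣ n} := by
  intro d hd e he (h : Ideal.span {(d : ZMod n)} = Ideal.span {(e : ZMod n)})
  have hde : (d : ZMod n) ∈ Ideal.span {(e : ZMod n)} := h ▸ Ideal.mem_span_singleton_self _
  have hed : (e : ZMod n) ∈ Ideal.span {(d : ZMod n)} := h ▸ Ideal.mem_span_singleton_self _
  exact Nat.dvd_antisymm ((natCast_mem_span_natCast_iff hd).1 hed)
    ((natCast_mem_span_natCast_iff he).1 hde)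

open scoped Classical in
/-- The primes `p ∣ n` such that `I` contains the minimal ideal `(n / p)`, the subgroup of order
`p`. -/
noncomputable def minimalIdealPrimes (n : ℕ) (I : Ideal (ZMod n)) : Finset ℕ :=
  {p ∈ n.primeFactors | ((n / p : ℕ) : ZMod n) ∈ I}

theorem minimalIdealPrimes_subset (I : Ideal (ZMod n)) :
    minimalIdealPrimes n I ⊆ n.primeFactors := by
  classical
  exact Finset.filter_subset _ _

theorem minimalIdealPrimes_top : minimalIdealPrimes n ⊤ = n.primeFactors := by
  classical
  simp [minimalIdealPrimes]

theorem minimalIdealPrimes_inf (I J : Ideal (ZMod n)) :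
    minimalIdealPrimes n (I ⊓ J) = minimalIdealPrimes n I ∩ minimalIdealPrimes n J := by
  ext p
  simp only [minimalIdealPrimes, Ideal.mem_inf, Finset.mem_inter, Finset.mem_filter]
  tauto

theorem minimalIdealPrimes_span_natCast [NeZero n] (hd : d ∣ n) :
    minimalIdealPrimes n (Ideal.span {(d : ZMod n)}) =
      {p ∈ n.primeFactors | d.factorization p < n.factorization p} := by
  classical
  refine Finset.filter_congr fun p hp => ?_
  rw [natCast_mem_span_natCast_iff hd, Nat.dvd_div_iff_factorization_lt (NeZero.ne n) hd hp]

theorem minimalIdealPrimes_nonempty_iff [NeZero n] {I : Ideal (ZMod n)} :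
    (minimalIdealPrimes n I).Nonempty ↔ I ≠ ⊥ := by
  constructor
  · rintro ⟨p, hp⟩ rfl
    simp only [minimalIdealPrimes, Finset.mem_filter] at hp
    obtain ⟨hpn, hp0⟩ := hp
    rw [Ideal.mem_bot, ZMod.natCast_eq_zero_iff] at hp0
    have hpos : 0 < n / p := Nat.div_pos (Nat.le_of_mem_primeFactors hpn)
      (Nat.pos_of_mem_primeFactors hpn)
    exact hpos.ne' (Nat.eq_zero_of_dvd_of_lt hp0
      (Nat.div_lt_self (NeZero.pos n) (Nat.prime_of_mem_primeFactors hpn).one_lt))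
  · intro hI
    obtain ⟨d, ⟨k, hk⟩, rfl⟩ := exists_dvd_and_eq_span_natCast I
    have hk1 : k ≠ 1 := by
      rintro rfl
      rw [mul_one] at hk
      exact hI (by rw [← hk, ZMod.natCast_self, Ideal.span_singleton_eq_bot])
    have hpk := Nat.minFac_dvd k
    have hpn : k.minFac ∣ n := hk ▸ dvd_mul_of_dvd_right hpk d
    refine ⟨k.minFac, ?_⟩
    simp only [minimalIdealPrimes, Finset.mem_filter]
    refine ⟨Nat.mem_primeFactors.2 ⟨Nat.minFac_prime hk1, hpn, NeZero.ne n⟩,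
      (natCast_mem_span_natCast_iff ⟨k, hk⟩).2 ?_⟩
    rw [Nat.dvd_div_iff_mul_dvd hpn, hk, mul_comm]
    exact mul_dvd_mul_left d hpk

theorem encard_preimage_minimalIdealPrimes_le_insert [NeZero n] {S : Finset ℕ} {q : ℕ}
    (hq : q ∈ n.primeFactors) (hqS : q ∉ S) :
    (minimalIdealPrimes n ⁻¹' {S}).encard ≤ (minimalIdealPrimes n ⁻¹' {insert q S}).encard := by
  choose d hdn hd using exists_dvd_and_eq_span_natCast (n := n)
  have hfull : ∀ I, minimalIdealPrimes n I = S → (d I).factorization q = n.factorization q := by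
    intro I hI
    have hqI : q ∉ minimalIdealPrimes n (Ideal.span {(d I : ZMod n)}) := by rwa [← hd I, hI]
    rw [minimalIdealPrimes_span_natCast (hdn I)] at hqI
    simp only [Finset.mem_filter, hq, true_and, not_lt] at hqI
    exact le_antisymm ((Nat.factorization_le_iff_dvd
      (ne_zero_of_dvd_ne_zero (NeZero.ne n) (hdn I)) (NeZero.ne n)).2 (hdn I) q) hqI
  -- Drop the `q`-part of a generator: on this fibre it is all of `q ^ v_q(n)` (`hfull`), so the
  -- map is injective.
  refine Set.encard_le_encard_of_injOn
    (f := fun I => Ideal.span {((ordCompl[q] (d I) : ℕ) : ZMod n)}) ?_ ?_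
  · intro I (hI : minimalIdealPrimes n I = S)
    have hτI := minimalIdealPrimes_span_natCast (hdn I)
    rw [← hd I] at hτI
    show minimalIdealPrimes n _ = insert q S
    rw [minimalIdealPrimes_span_natCast ((Nat.ordCompl_dvd _ _).trans (hdn I)), ← hI, hτI,
      Nat.factorization_ordCompl]
    ext p
    simp only [Finset.mem_filter, Finset.mem_insert]
    rcases eq_or_ne p q with rfl | hpq
    · simp [hq, (Nat.prime_of_mem_primeFactors hq).factorization_pos_of_dvd (NeZero.ne n)
        (Nat.dvd_of_mem_primeFactors hq)]
    · simp [Finsupp.erase_ne hpq, hpq]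
  · intro I hI J hJ hIJ
    have hcompl := span_natCast_injOn ((Nat.ordCompl_dvd _ _).trans (hdn I))
      ((Nat.ordCompl_dvd _ _).trans (hdn J)) hIJ
    have hdIJ : d I = d J := by
      rw [← Nat.ordProj_mul_ordCompl_eq_self (d I) q, ← Nat.ordProj_mul_ordCompl_eq_self (d J) q,
        hcompl, hfull I hI, hfull J hJ]
    rw [hd I, hd J, hdIJ]

theorem interGraph_adj_iff [NeZero n] {I J : {I : Ideal (ZMod n) // I ≠ ⊥ ∧ I ≠ ⊤}} :
    (interGraph (ZMod n)).Adj I J ↔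
      I ≠ J ∧ ¬Disjoint (minimalIdealPrimes n I.1) (minimalIdealPrimes n J.1) := by
  rw [Finset.not_disjoint_iff_nonempty_inter, ← minimalIdealPrimes_inf,
    minimalIdealPrimes_nonempty_iff]
  rfl

theorem encard_vertex_fiber_le_insert [NeZero n] {S : Finset ℕ} {q : ℕ} (hqS : q ∉ S)
    (hP : insert q S < n.primeFactors) :
    ((fun I : {I : Ideal (ZMod n) // I ≠ ⊥ ∧ I ≠ ⊤} => minimalIdealPrimes n I.1) ⁻¹' {S}).encard ≤
      ((fun I : {I : Ideal (ZMod n) // I ≠ ⊥ ∧ I ≠ ⊤} => minimalIdealPrimes n I.1) ⁻¹'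
        {insert q S}).encard := by
  have hval : ∀ T : Finset ℕ, T.Nonempty → T ≠ n.primeFactors →
      ((fun I : {I : Ideal (ZMod n) // I ≠ ⊥ ∧ I ≠ ⊤} => minimalIdealPrimes n I.1) ⁻¹'
        {T}).encard = (minimalIdealPrimes n ⁻¹' {T}).encard := by
    intro T hT hTP
    refine Set.encard_preimage_of_injective_subset_range (t := minimalIdealPrimes n ⁻¹' {T})
      Subtype.val_injective ?_
    rintro I (rfl : minimalIdealPrimes n I = T)
    exact ⟨⟨I, minimalIdealPrimes_nonempty_iff.1 hT, fun h => hTP (h ▸ minimalIdealPrimes_top)⟩,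
      rfl⟩
  rcases S.eq_empty_or_nonempty with rfl | hS
  · calc _ = 0 := Set.encard_eq_zero.2 <| Set.eq_empty_of_forall_notMem fun I hI =>
          (minimalIdealPrimes_nonempty_iff.2 I.2.1).ne_empty hI
      _ ≤ _ := zero_le
  rw [hval S hS ((Finset.subset_insert q S).trans_lt hP).ne,
    hval _ (Finset.insert_nonempty q S) hP.ne]
  exact encard_preimage_minimalIdealPrimes_le_insert (hP.le (Finset.mem_insert_self q S)) hqS

end ZMod

theorem stmt3 (n : ℕ) (hn : 0 < n) :
    (interGraph (ZMod n)).chromaticNumber = ((interGraph (ZMod n)).cliqueNum : ℕ∞) := by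
  have : NeZero n := ⟨hn.ne'⟩
  exact SimpleGraph.chromaticNumber_eq_cliqueNum_of_adj_iff_not_disjoint n.primeFactors
    (fun I => ZMod.minimalIdealPrimes n I.1) (fun I => ZMod.minimalIdealPrimes_subset I.1)
    (fun I => ZMod.minimalIdealPrimes_nonempty_iff.2 I.2.1) (fun _ _ => ZMod.interGraph_adj_iff)
    (Finset.monotoneOn_Iio_of_le_insert fun _ _ => ZMod.encard_vertex_fiber_le_insert)
end

section
/- Let n be squarefree with exactly m ≥ 2 distinct prime factors. Then the clique number and chromatic number of the intersection graph of ideals of Z/nZ both equal 2^{m-1} − 1. -/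
open Finset

def intersectionGraph (α : Type*) [Lattice α] [BoundedOrder α] :
    SimpleGraph {a : α // a ≠ ⊥ ∧ a ≠ ⊤} where
  Adj a b := a ≠ b ∧ a.1 ⊓ b.1 ≠ ⊥
  symm := ⟨by rintro a b ⟨hab, hinf⟩; exact ⟨hab.symm, by rwa [inf_comm]⟩⟩
  loopless := ⟨by rintro a ⟨h, -⟩; exact h rfl⟩

def OrderIso.intersectionGraphIso {α β : Type*} [Lattice α] [BoundedOrder α] [Lattice β]
    [BoundedOrder β] (e : α ≃o β) : intersectionGraph α ≃g intersectionGraph β where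
  toEquiv := e.toEquiv.subtypeEquiv fun a => by simp
  map_rel_iff' {a b} := by
    change (_ ≠ _ ∧ e a.1 ⊓ e b.1 ≠ ⊥) ↔ (a ≠ b ∧ a.1 ⊓ b.1 ≠ ⊥)
    rw [← map_inf e, ne_eq (e _), map_eq_bot_iff, (Equiv.injective _).ne_iff]

def OrderIso.piCongrRight {ι : Type*} {α β : ι → Type*} [∀ i, LE (α i)] [∀ i, LE (β i)]
    (e : ∀ i, α i ≃o β i) : (∀ i, α i) ≃o ∀ i, β i where
  toEquiv := Equiv.piCongrRight fun i => (e i).toEquiv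
  map_rel_iff' := by simp [Pi.le_def]

namespace SimpleGraph

variable {V W : Type*} {G : SimpleGraph V} {H : SimpleGraph W}

theorem Iso.isNClique_map (e : G ≃g H) {k : ℕ} {s : Finset V} (hs : G.IsNClique k s) :
    H.IsNClique k (s.map e.toEmbedding.toEmbedding) := by
  refine ⟨?_, (card_map _).trans hs.card_eq⟩
  rw [coe_map]
  rintro _ ⟨v, hv, rfl⟩ _ ⟨w, hw, rfl⟩ hvw
  exact e.map_adj_iff.2 (hs.isClique hv hw (ne_of_apply_ne _ hvw))

theorem Iso.cliqueNum_eq (e : G ≃g H) : G.cliqueNum = H.cliqueNum := by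
  simp only [cliqueNum]
  congr 1
  ext k
  exact ⟨fun ⟨s, hs⟩ => ⟨_, e.isNClique_map hs⟩, fun ⟨s, hs⟩ => ⟨_, e.symm.isNClique_map hs⟩⟩

theorem cliqueNum_eq_and_chromaticNumber_eq {k : ℕ} {s : Finset V} (hs : G.IsNClique k s)
    (hc : G.Colorable k) : G.cliqueNum = k ∧ G.chromaticNumber = k := by
  have hle : G.cliqueNum ≤ k := by
    obtain ⟨t, ht⟩ := G.exists_isNClique_cliqueNum
    exact ht.card_eq ▸ ht.isClique.card_le_of_colorable hc
  have hge : k ≤ G.cliqueNum :=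
    le_csSup ⟨k, fun _ ⟨t, ht⟩ => ht.card_eq ▸ ht.isClique.card_le_of_colorable hc⟩ ⟨s, hs⟩
  refine ⟨le_antisymm hle hge, le_antisymm hc.chromaticNumber_le ?_⟩
  exact hs.card_eq ▸ hs.isClique.card_le_chromaticNumber

end SimpleGraph

section BooleanAlgebra

variable {α : Type*} [BooleanAlgebra α] {a₀ : α}

theorem IsAtom.le_compl_iff (h : IsAtom a₀) {b : α} : a₀ ≤ bᶜ ↔ ¬ a₀ ≤ b := by
  rw [le_compl_iff_disjoint_right, h.not_le_iff_disjoint]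

theorem IsAtom.two_mul_card_filter_le [Fintype α] [DecidableLE α] (h : IsAtom a₀) :
    2 * #{b | a₀ ≤ b} = Fintype.card α := by
  have hswap : #{b | a₀ ≤ b} = #{b | ¬ a₀ ≤ b} := by
    refine card_nbij' (· \ a₀) (· ⊔ a₀) ?_ ?_ ?_ ?_
    · intro b _
      simpa using fun hb : a₀ ≤ b \ a₀ =>
        h.1 (disjoint_self.mp (disjoint_sdiff_self_left.mono_left hb))
    · intro c _
      simp
    · intro b hb
      exact sdiff_sup_cancel (by simpa using hb)
    · intro c hc
      simp only [coe_filter, mem_univ, true_and, Set.mem_ofPred_eq] at hc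
      simpa using (h.not_le_iff_disjoint.mp hc).symm.sdiff_eq_left
  rw [two_mul]
  nth_rw 2 [hswap]
  exact card_filter_add_card_filter_not _

variable [Fintype α] [DecidableEq α] [DecidableLE α]

theorem IsAtom.colorable_intersectionGraph (h : IsAtom a₀) :
    (intersectionGraph α).Colorable
      (Fintype.card {v : {a : α // a ≠ ⊥ ∧ a ≠ ⊤} // a₀ ≤ v.1}) := by
  let rep (v : {a : α // a ≠ ⊥ ∧ a ≠ ⊤}) : {v : {a : α // a ≠ ⊥ ∧ a ≠ ⊤} // a₀ ≤ v.1} :=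
    if hv : a₀ ≤ v.1 then ⟨v, hv⟩
    else ⟨⟨v.1ᶜ, by simpa using v.2.symm⟩, h.le_compl_iff.2 hv⟩
  refine (SimpleGraph.Coloring.mk rep ?_).colorable
  rintro v w ⟨hvw, hinf⟩ hrep
  simp only [rep] at hrep
  split_ifs at hrep with hv hw hw
  · exact hvw (congrArg Subtype.val hrep)
  · exact hinf (by rw [show v.1 = w.1ᶜ from congrArg (fun x => x.1.1) hrep, compl_inf_self])
  · exact hinf (by rw [show w.1 = v.1ᶜ from (congrArg (fun x => x.1.1) hrep).symm, inf_compl_self])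
  · exact hvw (Subtype.ext (compl_injective (congrArg (fun x => x.1.1) hrep)))

theorem IsAtom.isNClique_intersectionGraph (h : IsAtom a₀) :
    (intersectionGraph α).IsNClique (Fintype.card {v : {a : α // a ≠ ⊥ ∧ a ≠ ⊤} // a₀ ≤ v.1})
      {v | a₀ ≤ v.1} := by
  refine ⟨fun v hv w hw hvw => ⟨hvw, ?_⟩, (Fintype.card_subtype _).symm⟩
  simp only [coe_filter, mem_univ, true_and, Set.mem_ofPred_eq] at hv hw
  exact ne_bot_of_le_ne_bot h.1 (le_inf hv hw)

theorem IsAtom.card_intersectionGraph_vertices_ge (h : IsAtom a₀) :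
    Fintype.card {v : {a : α // a ≠ ⊥ ∧ a ≠ ⊤} // a₀ ≤ v.1} = Fintype.card α / 2 - 1 := by
  have e : {v : {a : α // a ≠ ⊥ ∧ a ≠ ⊤} // a₀ ≤ v.1} ≃ {b : α // a₀ ≤ b ∧ b ≠ ⊤} :=
    (Equiv.subtypeSubtypeEquivSubtypeInter _ _).trans <| Equiv.subtypeEquivRight fun b =>
      ⟨fun hb => ⟨hb.2, hb.1.2⟩, fun hb => ⟨⟨ne_bot_of_le_ne_bot h.1 hb.1, hb.2⟩, hb.1⟩⟩
  have hcard : #{b : α | a₀ ≤ b ∧ b ≠ ⊤} = #{b : α | a₀ ≤ b} - 1 := by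
    rw [← filter_filter, filter_ne', card_erase_of_mem (by simp)]
  rw [Fintype.card_congr e, Fintype.card_subtype, hcard, ← h.two_mul_card_filter_le]
  omega

end BooleanAlgebra

theorem intersectionGraph_cliqueNum_eq_and_chromaticNumber_eq (α : Type*) [BooleanAlgebra α]
    [Fintype α] :
    (intersectionGraph α).cliqueNum = Fintype.card α / 2 - 1 ∧
      (intersectionGraph α).chromaticNumber = (Fintype.card α / 2 - 1 : ℕ) := by
  classical
  rcases subsingleton_or_nontrivial α with hα | hα
  · have hempty : IsEmpty {a : α // a ≠ ⊥ ∧ a ≠ ⊤} := ⟨fun a => a.2.1 (Subsingleton.elim _ _)⟩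
    have hzero : Fintype.card α / 2 - 1 = 0 := by
      have := Fintype.card_le_one_iff_subsingleton.2 hα
      omega
    rw [hzero]
    exact SimpleGraph.cliqueNum_eq_and_chromaticNumber_eq (SimpleGraph.isNClique_empty.2 rfl)
      (SimpleGraph.colorable_zero_iff.2 hempty)
  · obtain ⟨a₀, ha₀⟩ := IsAtomic.exists_atom (α := α)
    rw [← ha₀.card_intersectionGraph_vertices_ge]
    exact SimpleGraph.cliqueNum_eq_and_chromaticNumber_eq ha₀.isNClique_intersectionGraph
      ha₀.colorable_intersectionGraph

instance Nat.fact_prime_of_mem_primeFactors {n : ℕ} (p : n.primeFactors) : Fact (p : ℕ).Prime :=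
  ⟨Nat.prime_of_mem_primeFactors p.2⟩

noncomputable def ZMod.ringEquivPiOfSquarefree {n : ℕ} (hn : Squarefree n) :
    ZMod n ≃+* Π p : n.primeFactors, ZMod p :=
  (ZMod.ringEquivCongr (by rw [prod_coe_sort n.primeFactors (fun p => p),
    Nat.prod_primeFactors_of_squarefree hn])).trans <|
    ZMod.prodEquivPi _ fun p q hpq => (Nat.coprime_primes (Nat.prime_of_mem_primeFactors p.2)
      (Nat.prime_of_mem_primeFactors q.2)).2 (Subtype.coe_injective.ne hpq)

open Classical in
noncomputable def ZMod.idealOrderIsoOfSquarefree {n : ℕ} (hn : Squarefree n) :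
    Ideal (ZMod n) ≃o (n.primeFactors → Bool) :=
  (ZMod.ringEquivPiOfSquarefree hn).idealComapOrderIso.symm.trans <|
    Ideal.piOrderIso.trans <| OrderIso.piCongrRight fun _ => IsSimpleOrder.orderIsoBool

theorem stmt5_general (n m : ℕ) (hn : Squarefree n) (hm : n.primeFactors.card = m) :
    (interGraph (ZMod n)).cliqueNum = 2 ^ (m - 1) - 1 ∧
    (interGraph (ZMod n)).chromaticNumber = ((2 ^ (m - 1) - 1 : ℕ) : ℕ∞) := by
  have hcard : Fintype.card (n.primeFactors → Bool) / 2 - 1 = 2 ^ (m - 1) - 1 := by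
    rw [Fintype.card_fun, Fintype.card_bool, Fintype.card_coe, hm]
    rcases m with _ | m <;> simp [pow_succ]
  -- `interGraph R` is `intersectionGraph (Ideal R)` on the nose
  let e : interGraph (ZMod n) ≃g intersectionGraph (n.primeFactors → Bool) :=
    (ZMod.idealOrderIsoOfSquarefree hn).intersectionGraphIso
  rw [e.cliqueNum_eq, SimpleGraph.chromaticNumber_congr e, ← hcard]
  exact intersectionGraph_cliqueNum_eq_and_chromaticNumber_eq _

theorem stmt5 (n m : ℕ) (hn : Squarefree n) (hm : n.primeFactors.card = m) (h2 : 2 ≤ m) :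
    (interGraph (ZMod n)).cliqueNum = 2 ^ (m - 1) - 1 ∧
    (interGraph (ZMod n)).chromaticNumber = ((2 ^ (m - 1) - 1 : ℕ) : ℕ∞) :=
  stmt5_general n m hn hm
end

section
/- Let R ≅ F_1 × ⋯ × F_m be a product of m ≥ 2 fields. Then the clique number and chromatic number of the intersection graph of ideals of R both equal 2^{m-1} − 1. -/
/-!
By `Ideal.piOrderIso`, the ideals of `∏ Fᵢ` form the Boolean lattice of subsets of `Fin m`, so the
intersection graph is the intersection graph of the nonempty proper subsets of `Fin m`. Fix an
index `z`. The `2 ^ (m - 1) - 1` proper subsets containing `z` pairwise meet, so they form a clique.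
Sending each vertex `S` to whichever of `S`, `Sᶜ` contains `z` is a proper colouring with that
many colours, because adjacent vertices are distinct and not complementary.
-/

open Finset SimpleGraph

theorem SimpleGraph.cliqueNum_eq_card_and_chromaticNumber_eq_card {V α : Type*}
    {G : SimpleGraph V} [Fintype α] (f : (⊤ : SimpleGraph α).Copy G) (C : G.Coloring α) :
    G.cliqueNum = Fintype.card α ∧ G.chromaticNumber = Fintype.card α := by
  have hchrom : G.chromaticNumber ≤ Fintype.card α := C.colorable.chromaticNumber_le
  have hclique : Fintype.card α ≤ G.cliqueNum :=
    le_csSup ⟨Fintype.card α, fun _ ⟨_, hs⟩ => hs.card_eq ▸ hs.isClique.card_le_of_coloring C⟩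
      ⟨_, isNClique_map_copy_top f⟩
  have hle : (G.cliqueNum : ℕ∞) ≤ Fintype.card α := G.cliqueNum_le_chromaticNumber.trans hchrom
  exact ⟨le_antisymm (by exact_mod_cast hle) hclique,
    le_antisymm hchrom ((Nat.cast_le.2 hclique).trans G.cliqueNum_le_chromaticNumber)⟩

open Classical in
noncomputable def OrderIso.piFinsetOfIsSimpleOrder {ι : Type*} [Fintype ι] {α : ι → Type*}
    [∀ i, PartialOrder (α i)] [∀ i, BoundedOrder (α i)] [∀ i, IsSimpleOrder (α i)] :
    (∀ i, α i) ≃o Finset ι where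
  toFun f := {i | f i = ⊤}
  invFun s i := if i ∈ s then ⊤ else ⊥
  left_inv f := funext fun i => by
    rcases eq_bot_or_eq_top (f i) with h | h <;> simp [h]
  right_inv s := by ext i; by_cases h : i ∈ s <;> simp [h]
  map_rel_iff' {f g} := by
    simp only [Equiv.coe_fn_mk, subset_iff, mem_filter, mem_univ, true_and, Pi.le_def]
    refine forall_congr' fun i => ?_
    rcases eq_bot_or_eq_top (f i) with h | h <;> simp [h]

def interGraphIsoSubsetGraph {R : Type*} [CommRing R] {m : ℕ} (e : Ideal R ≃o Finset (Fin m)) :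
    interGraph R ≃g subsetGraph m where
  toEquiv := e.toEquiv.subtypeEquiv fun I => by
    simp [← bot_eq_empty, ← top_eq_univ]
  map_rel_iff' {I J} := by
    refine and_congr (not_congr ?_) ?_
    · simp [Subtype.ext_iff]
    · change (e I.1 ∩ e J.1).Nonempty ↔ I.1 ⊓ J.1 ≠ ⊥
      rw [nonempty_iff_ne_empty, ← bot_eq_empty, ← inf_eq_inter, ← map_inf, Ne, map_eq_bot_iff]

section ProperSupersets

variable {α : Type*} [Fintype α] [DecidableEq α] (a : α)

lemma Finset.mem_Ico_singleton_univ {S : Finset α} : S ∈ Ico {a} univ ↔ a ∈ S ∧ S ≠ univ := by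
  simp [mem_Ico, ssubset_univ_iff]

lemma Finset.compl_mem_Ico_singleton_univ {S : Finset α} (hS : S ≠ ∅) (ha : a ∉ S) :
    Sᶜ ∈ Ico {a} univ :=
  (mem_Ico_singleton_univ a).2 ⟨mem_compl.2 ha, by simpa [compl_eq_univ_iff] using hS⟩

lemma Finset.card_Ico_singleton_univ :
    Fintype.card (Ico {a} univ) = 2 ^ (Fintype.card α - 1) - 1 := by
  rw [Fintype.card_coe, card_Ico_finset (by simp), card_univ, card_singleton]

end ProperSupersets

namespace subsetGraph

variable {m : ℕ} (z : Fin m)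

def starCopy : (⊤ : SimpleGraph (Ico {z} univ)).Copy (subsetGraph m) where
  toHom :=
    { toFun S := ⟨S, ne_empty_of_mem ((mem_Ico_singleton_univ z).1 S.2).1,
        ((mem_Ico_singleton_univ z).1 S.2).2⟩
      map_rel' {S T} hST := ⟨fun h => hST (Subtype.ext (Subtype.mk.inj h)),
        z, mem_inter.2 ⟨((mem_Ico_singleton_univ z).1 S.2).1, ((mem_Ico_singleton_univ z).1 T.2).1⟩⟩ }
  injective' _ _ h := Subtype.ext (congrArg Subtype.val h :)

def starColoring : (subsetGraph m).Coloring (Ico {z} univ) :=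
  Coloring.mk
    (fun S => if hz : z ∈ S.1 then ⟨S, (mem_Ico_singleton_univ z).2 ⟨hz, S.2.2⟩⟩
      else ⟨S.1ᶜ, compl_mem_Ico_singleton_univ z S.2.1 hz⟩)
    (by
      rintro ⟨S, _⟩ ⟨T, _⟩ ⟨hne, x, hx⟩ hcol
      rw [mem_inter] at hx
      split_ifs at hcol <;> simp only [Subtype.mk.injEq] at hcol
      · exact hne (Subtype.ext hcol)
      · exact mem_compl.1 (hcol ▸ hx.1) hx.2
      · exact mem_compl.1 (hcol ▸ hx.2) hx.1
      · exact hne (Subtype.ext (compl_injective hcol)))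

end subsetGraph

theorem stmt6 (m : ℕ) (hm : 2 ≤ m) (F : Fin m → Type*) [∀ i, Field (F i)] :
    (interGraph (∀ i, F i)).cliqueNum = 2 ^ (m - 1) - 1 ∧
    (interGraph (∀ i, F i)).chromaticNumber = ((2 ^ (m - 1) - 1 : ℕ) : ℕ∞) := by
  let e := interGraphIsoSubsetGraph (Ideal.piOrderIso.trans OrderIso.piFinsetOfIsSimpleOrder :
    Ideal (∀ i, F i) ≃o Finset (Fin m))
  let z : Fin m := ⟨0, by omega⟩
  have hcard : Fintype.card (Ico {z} univ) = 2 ^ (m - 1) - 1 := by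
    rw [card_Ico_singleton_univ, Fintype.card_fin]
  rw [← hcard]
  exact cliqueNum_eq_card_and_chromaticNumber_eq_card
    (e.symm.toCopy.comp (subsetGraph.starCopy z)) ((subsetGraph.starColoring z).comp e.toHom)
end

section
/- In the intersection graph G of ideals of F_1 × ⋯ × F_m (m ≥ 3 fields), each ideal I_j with exactly one zero component (in position j) has degree 2^m − 4, and this is the maximum degree of G; moreover these m ideals are precisely the vertices of maximum degree. -/
/-! The subsets that miss a vertex `S` are exactly the subsets of its complement, so `S` meets
`2 ^ m - 2 ^ #Sᶜ` subsets; discarding `S` itself and the full set gives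
`deg S = 2 ^ m - 2 ^ #Sᶜ - 2`. As `1 ≤ #Sᶜ`, this is at most `2 ^ m - 4`, with equality
exactly when `Sᶜ` is a singleton. -/

open Finset

section Counting

variable {α : Type*} [Fintype α] [DecidableEq α]

theorem card_filter_disjoint (S : Finset α) : #{T : Finset α | Disjoint S T} = 2 ^ #Sᶜ := by
  rw [← card_powerset]
  congr 1
  ext T
  simp [subset_compl_iff_disjoint_left]

theorem card_filter_inter_nonempty (S : Finset α) :
    #{T : Finset α | (S ∩ T).Nonempty} = 2 ^ Fintype.card α - 2 ^ #Sᶜ := by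
  have h := card_filter_add_card_filter_not (s := (univ : Finset (Finset α)))
    (fun T => (S ∩ T).Nonempty)
  simp only [← not_disjoint_iff_nonempty_inter, not_not, card_filter_disjoint, card_univ,
    Fintype.card_finset] at h ⊢
  omega

theorem card_compl_eq_one_iff (S : Finset α) : #Sᶜ = 1 ↔ ∃ j, S = univ \ {j} := by
  simp only [card_eq_one, ← compl_eq_univ_sdiff, eq_compl_comm, eq_comm]

end Counting

theorem pow_sub_pow_sub_two_le (m : ℕ) {k : ℕ} (hk : 1 ≤ k) : 2 ^ m - 2 ^ k - 2 ≤ 2 ^ m - 4 := by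
  have : 2 ≤ 2 ^ k := Nat.le_self_pow (by omega) 2
  omega

theorem pow_sub_pow_sub_two_eq_iff {m k : ℕ} (hk : 1 ≤ k) (hkm : k < m) :
    2 ^ m - 2 ^ k - 2 = 2 ^ m - 4 ↔ k = 1 := by
  have h2k : 2 ≤ 2 ^ k := Nat.le_self_pow (by omega) 2
  have hpow : 2 * 2 ^ k ≤ 2 ^ m := by
    rw [← pow_succ']; exact Nat.pow_le_pow_right (by omega) hkm
  suffices 2 ^ m - 2 ^ k - 2 = 2 ^ m - 4 ↔ 2 ^ k = 2 ^ 1 from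
    this.trans (Nat.pow_right_injective le_rfl).eq_iff
  rw [pow_one]
  omega

namespace subsetGraph

variable {m : ℕ}

theorem card_compl_pos (v : {S : Finset (Fin m) // S ≠ ∅ ∧ S ≠ univ}) : 0 < #v.1ᶜ := by
  simpa [card_pos, nonempty_iff_ne_empty] using v.2.2

theorem card_compl_lt (v : {S : Finset (Fin m) // S ≠ ∅ ∧ S ≠ univ}) : #v.1ᶜ < m := by
  have := card_pos.2 (nonempty_iff_ne_empty.2 v.2.1)
  have := card_le_univ v.1
  rw [card_compl, Fintype.card_fin] at *
  omega

theorem vdeg_eq_card_sub_two (v : {S : Finset (Fin m) // S ≠ ∅ ∧ S ≠ univ}) :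
    vdeg (subsetGraph m) v = #{T : Finset (Fin m) | (v.1 ∩ T).Nonempty} - 2 := by
  obtain ⟨S, hS, hS'⟩ := v
  let nbrs := ({T : Finset (Fin m) | (S ∩ T).Nonempty} : Finset _) \ {S, univ}
  have e : {w // (subsetGraph m).Adj ⟨S, hS, hS'⟩ w} ≃ nbrs :=
    { toFun := fun w => ⟨w.1.1, by
        simpa [nbrs, w.2.2, w.1.2.2] using fun h => w.2.1 (Subtype.ext h.symm)⟩
      invFun := fun T => by
        obtain ⟨T, hT⟩ := T
        simp only [nbrs, mem_sdiff, mem_filter, mem_univ, true_and, mem_insert,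
          mem_singleton, not_or] at hT
        exact ⟨⟨T, (hT.1.mono inter_subset_right).ne_empty, hT.2.2⟩,
          fun h => hT.2.1 (congrArg Subtype.val h).symm, hT.1⟩
      left_inv := fun _ => rfl
      right_inv := fun _ => rfl }
  have hpair : {S, univ} ⊆ ({T : Finset (Fin m) | (S ∩ T).Nonempty} : Finset _) := by
    simp [insert_subset_iff, nonempty_iff_ne_empty, hS]
  rw [vdeg, Nat.card_congr e, Nat.card_eq_fintype_card, Fintype.card_coe,
    card_sdiff_of_subset hpair, card_pair hS']

theorem vdeg_eq (v : {S : Finset (Fin m) // S ≠ ∅ ∧ S ≠ univ}) :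
    vdeg (subsetGraph m) v = 2 ^ m - 2 ^ #v.1ᶜ - 2 := by
  rw [vdeg_eq_card_sub_two, card_filter_inter_nonempty, Fintype.card_fin]

end subsetGraph

theorem stmt11 (m : ℕ) (hm : 3 ≤ m) :
    (∀ j : Fin m, ∃ v : {S : Finset (Fin m) // S ≠ ∅ ∧ S ≠ Finset.univ},
      v.1 = Finset.univ \ {j} ∧ vdeg (subsetGraph m) v = 2 ^ m - 4) ∧
    maxDeg (subsetGraph m) = 2 ^ m - 4 ∧
    (∀ v : {S : Finset (Fin m) // S ≠ ∅ ∧ S ≠ Finset.univ},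
      vdeg (subsetGraph m) v = 2 ^ m - 4 ↔ ∃ j : Fin m, v.1 = Finset.univ \ {j}) := by
  have hle (v : {S : Finset (Fin m) // S ≠ ∅ ∧ S ≠ univ}) : vdeg (subsetGraph m) v ≤ 2 ^ m - 4 :=
    subsetGraph.vdeg_eq v ▸ pow_sub_pow_sub_two_le m (subsetGraph.card_compl_pos v)
  have hmax (v : {S : Finset (Fin m) // S ≠ ∅ ∧ S ≠ univ}) :
      vdeg (subsetGraph m) v = 2 ^ m - 4 ↔ ∃ j, v.1 = univ \ {j} := by
    rw [subsetGraph.vdeg_eq, pow_sub_pow_sub_two_eq_iff (subsetGraph.card_compl_pos v)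
      (subsetGraph.card_compl_lt v), card_compl_eq_one_iff]
  have hcoatom (j : Fin m) : ∃ v : {S : Finset (Fin m) // S ≠ ∅ ∧ S ≠ univ},
      v.1 = univ \ {j} ∧ vdeg (subsetGraph m) v = 2 ^ m - 4 := by
    have hne : univ \ {j} ≠ ∅ := by
      rw [← nonempty_iff_ne_empty, ← card_pos, card_univ_sdiff, Fintype.card_fin, card_singleton]
      omega
    exact ⟨⟨univ \ {j}, hne, by simp⟩, rfl, (hmax _).2 ⟨j, rfl⟩⟩
  refine ⟨hcoatom, ?_, hmax⟩
  obtain ⟨v, -, hv⟩ := hcoatom ⟨0, by omega⟩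
  exact IsGreatest.csSup_eq ⟨⟨v, hv⟩, Set.forall_mem_range.2 hle⟩
end

section
/- Let m ≥ 3 and consider the graph G whose vertices are the non-empty proper subsets of {1,…,m}, with S adjacent to T iff S ≠ T and S ∩ T ≠ ∅. Then the edge chromatic number of G equals its maximum degree, namely χ′(G) = Δ(G) = 2^m − 4. -/
/-! A set and its complement are never adjacent. Pairing every vertex with its complement
therefore embeds the graph into the cocktail-party graph on `k = 2 ^ (m - 1) - 1` pairs
(`K_{2k}` minus a perfect matching), and that graph has a proper edge colouring with
`2k - 2 = 2 ^ m - 4` colours built from the group `ZMod k`. Conversely, a co-singleton `{i}ᶜ`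
meets every vertex except itself and `{i}`, so its `2 ^ m - 4` edges pairwise share a vertex and
need distinct colours. -/

namespace SimpleGraph

variable {V W α : Type*} {G : SimpleGraph V} {H : SimpleGraph W}

theorem lineGraph_colorable_of_edgeLabel [Fintype α] (c : V → V → α)
    (hsymm : ∀ u v, c u v = c v u)
    (hproper : ∀ u v w, G.Adj u v → G.Adj u w → v ≠ w → c u v ≠ c u w) :
    G.lineGraph.Colorable (Fintype.card α) := by
  refine Coloring.colorable (Coloring.mk (fun e => Sym2.lift ⟨c, hsymm⟩ e.1) ?_)
  intro e₁ e₂ hadj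
  obtain ⟨hne, u, hu₁, hu₂⟩ := lineGraph_adj_iff_exists.mp hadj
  obtain ⟨v, hv⟩ := Sym2.mem_iff_exists.mp hu₁
  obtain ⟨w, hw⟩ := Sym2.mem_iff_exists.mp hu₂
  have huv : G.Adj u v := by simpa [hv] using e₁.2
  have huw : G.Adj u w := by simpa [hw] using e₂.2
  have hvw : v ≠ w := fun h => hne (Subtype.ext (by rw [hv, hw, h]))
  simpa [hv, hw] using hproper u v w huv huw hvw

theorem lineGraph_colorable_of_isContained {n : ℕ} (hGH : G ⊑ H)
    (hH : H.lineGraph.Colorable n) : G.lineGraph.Colorable n :=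
  hH.of_hom hGH.lineGraph.some.toHom

end SimpleGraph

theorem vdeg_le_edgeChrom {V : Type*} (G : SimpleGraph V) (v : V) :
    (vdeg G v : ℕ∞) ≤ edgeChrom G := by
  refine SimpleGraph.le_chromaticNumber_of_pairwise_adj le_rfl
    (fun w : {w // G.Adj v w} => (⟨s(v, w), w.2⟩ : G.edgeSet)) ?_
  intro w w' hne
  rw [SimpleGraph.lineGraph_adj_iff_exists]
  exact ⟨fun h => hne (Subtype.ext (Sym2.congr_right.mp (congrArg Subtype.val h))), v,
    Sym2.mem_mk_left _ _, Sym2.mem_mk_left _ _⟩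

theorem maxDeg_eq_of_forall_le {V : Type*} {G : SimpleGraph V} {d : ℕ}
    (hle : ∀ v, vdeg G v ≤ d) (hd : ∃ v, vdeg G v = d) : maxDeg G = d := by
  obtain ⟨v, rfl⟩ := hd
  have : Nonempty V := ⟨v⟩
  exact le_antisymm (ciSup_le hle) (le_ciSup ⟨_, Set.forall_mem_range.mpr hle⟩ v)

theorem Fintype.card_subtype_ne_and_ne {α : Type*} [Fintype α] [DecidableEq α] {a b : α}
    (hab : a ≠ b) : Fintype.card {x : α // x ≠ a ∧ x ≠ b} = Fintype.card α - 2 := by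
  rw [Fintype.card_subtype, ← Finset.card_pair hab, ← Finset.card_compl]
  congr 1
  ext x
  simp

def cocktailParty (k : ℕ) : SimpleGraph (ZMod k × Bool) :=
  (⊤ : SimpleGraph (ZMod k)).comap Prod.fst

@[simp] theorem cocktailParty_adj {k : ℕ} {a b : ZMod k × Bool} :
    (cocktailParty k).Adj a b ↔ a.1 ≠ b.1 := by
  simp [cocktailParty]

namespace cocktailParty

variable {k : ℕ}

abbrev Color (k : ℕ) := ZMod k ⊕ {z : ZMod k // z ≠ 0 ∧ z ≠ -1}

def crossColor (x y : ZMod k) : Color k :=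
  if h : y - x ≠ 0 ∧ y - x ≠ -1 then .inr ⟨y - x, h⟩ else .inl (2 * x)

/-- Inside each layer an edge is coloured by the sum of its ends (shifted by `2` in the `true`
layer), a cross edge by the difference of its ends. The two differences `0` and `-1` that have no
colour of their own are the non-edges `(x, false)`, `(x, true)` and the edges
`(x, false)`, `(x - 1, true)`; the latter take the colour `2x`, which is missing at both ends. -/
def edgeColor : ZMod k × Bool → ZMod k × Bool → Color k
  | (x, false), (y, false) => .inl (x + y)
  | (x, true), (y, true) => .inl (x + y + 2)
  | (x, false), (y, true) => crossColor x y
  | (x, true), (y, false) => crossColor y x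

theorem edgeColor_comm (a b : ZMod k × Bool) : edgeColor a b = edgeColor b a := by
  rcases a with ⟨x, _ | _⟩ <;> rcases b with ⟨y, _ | _⟩ <;> simp [edgeColor, add_comm x y]

theorem edgeColor_injective {x y y' : ZMod k} {s t t' : Bool} (hy : x ≠ y) (hy' : x ≠ y')
    (h : edgeColor (x, s) (y, t) = edgeColor (x, s) (y', t')) : (y, t) = (y', t') := by
  cases s <;> cases t <;> cases t' <;> simp only [edgeColor, crossColor] at h <;>
    (try split_ifs at h) <;> grind

theorem lineGraph_colorable (hk : 2 ≤ k) :
    (cocktailParty k).lineGraph.Colorable (2 * k - 2) := by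
  have : NeZero k := ⟨by omega⟩
  have hcard : Fintype.card (Color k) = 2 * k - 2 := by
    have : Fact (1 < k) := ⟨hk⟩
    rw [Fintype.card_sum, Fintype.card_subtype_ne_and_ne (neg_ne_zero.mpr one_ne_zero).symm,
      ZMod.card]
    omega
  refine hcard ▸ SimpleGraph.lineGraph_colorable_of_edgeLabel edgeColor edgeColor_comm ?_
  rintro ⟨x, s⟩ ⟨y, t⟩ ⟨y', t'⟩ hy hy' hne h
  exact hne (edgeColor_injective (cocktailParty_adj.mp hy) (cocktailParty_adj.mp hy') h)

end cocktailParty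

namespace Finset

variable {α : Type*} [Fintype α] [DecidableEq α]

def complIfMem (a : α) (S : Finset α) : Finset α := if a ∈ S then Sᶜ else S

theorem complIfMem_mem_powerset_erase {a : α} {S : Finset α}
    (h₀ : S ≠ ∅) (h₁ : S ≠ univ) :
    complIfMem a S ∈ (univ.erase a).powerset.erase ∅ := by
  unfold complIfMem
  split_ifs with ha <;> simp [subset_erase, *]

theorem eq_or_eq_compl_of_complIfMem_eq {a : α} {S T : Finset α}
    (h : complIfMem a S = complIfMem a T) : S = T ∨ S = Tᶜ := by
  unfold complIfMem at h
  split_ifs at h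
  · exact .inl (compl_injective h)
  · exact .inr (eq_compl_comm.mpr h.symm)
  · exact .inr h
  · exact .inl h

theorem card_powerset_erase_univ_erase (a : α) :
    ((univ.erase a).powerset.erase ∅).card = 2 ^ (Fintype.card α - 1) - 1 := by
  rw [card_erase_of_mem (empty_mem_powerset _), card_powerset, card_erase_of_mem (mem_univ a),
    card_univ]

end Finset

abbrev ProperSubset (m : ℕ) := {S : Finset (Fin m) // S ≠ ∅ ∧ S ≠ Finset.univ}

namespace ProperSubset

variable {m : ℕ}

def compl (S : ProperSubset m) : ProperSubset m :=
  ⟨S.1ᶜ, by simpa using S.2.2, by simpa using S.2.1⟩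

theorem compl_compl (S : ProperSubset m) : S.compl.compl = S :=
  Subtype.ext (_root_.compl_compl S.1)

theorem compl_ne (S : ProperSubset m) : S.compl ≠ S := fun h => by
  obtain ⟨x, hx⟩ := Finset.nonempty_iff_ne_empty.mpr S.2.1
  have hx' : x ∈ S.compl.1 := by rwa [h]
  exact Finset.mem_compl.mp hx' hx

theorem card_eq (hm : 0 < m) : Fintype.card (ProperSubset m) = 2 ^ m - 2 := by
  have : Nonempty (Fin m) := ⟨⟨0, hm⟩⟩
  have hfilter : Finset.univ.filter (fun S : Finset (Fin m) => S ≠ ∅ ∧ S ≠ Finset.univ)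
      = {∅, Finset.univ}ᶜ := by
    ext S
    simp
  rw [Fintype.card_subtype, hfilter, Finset.card_compl, Fintype.card_finset, Fintype.card_fin,
    Finset.card_pair (Finset.univ_nonempty (α := Fin m)).ne_empty.symm]

end ProperSubset

section subsetGraph

variable {m : ℕ}

theorem subsetGraph_adj_iff {S T : ProperSubset m} :
    (subsetGraph m).Adj S T ↔ T ≠ S ∧ ¬ T.1 ⊆ S.1ᶜ := by
  rw [Finset.subset_compl_iff_disjoint_right, Finset.not_disjoint_iff_nonempty_inter]
  exact and_congr ne_comm (by rw [Finset.inter_comm])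

open SimpleGraph in
theorem subsetGraph_isContained_cocktailParty (hm : 2 ≤ m) :
    subsetGraph m ⊑ cocktailParty (2 ^ (m - 1) - 1) := by
  set a : Fin m := ⟨0, by omega⟩
  set P := (Finset.univ.erase a).powerset.erase ∅
  have hP : P.card = 2 ^ (m - 1) - 1 := by
    rw [Finset.card_powerset_erase_univ_erase, Fintype.card_fin]
  have : NeZero (2 ^ (m - 1) - 1) := ⟨(Nat.sub_pos_of_lt (Nat.one_lt_two_pow (by omega))).ne'⟩
  let e : P ≃ ZMod (2 ^ (m - 1) - 1) :=
    P.equivFin.trans ((finCongr hP).trans (ZMod.finEquiv _).toEquiv)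
  let f : ProperSubset m → ZMod (2 ^ (m - 1) - 1) × Bool :=
    fun S => (e ⟨_, Finset.complIfMem_mem_powerset_erase S.2.1 S.2.2⟩, decide (a ∈ S.1))
  have key : ∀ {S T}, (f S).1 = (f T).1 → S.1 = T.1 ∨ S.1 = T.1ᶜ := fun h =>
    Finset.eq_or_eq_compl_of_complIfMem_eq (congrArg Subtype.val (e.injective h))
  refine ⟨⟨f, fun {S T} hST hf => ?_⟩, fun S T hf => ?_⟩
  · rcases key hf with h | h
    · exact hST.1 (Subtype.ext h)
    · simpa [h, Finset.inter_comm _ T.1, Finset.inter_compl] using hST.2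
  · replace hf : f S = f T := hf
    rcases key (congrArg Prod.fst hf) with h | h
    · exact Subtype.ext h
    · simpa [f, h] using congrArg Prod.snd hf

theorem vdeg_subsetGraph_le (S : ProperSubset m) :
    vdeg (subsetGraph m) S ≤ Fintype.card (ProperSubset m) - 2 := by
  classical
  rw [← Fintype.card_subtype_ne_and_ne S.compl_ne.symm, ← Nat.card_eq_fintype_card, vdeg]
  refine Nat.card_mono (Set.toFinite _) fun T hT => ?_
  obtain ⟨hne, hdisj⟩ := subsetGraph_adj_iff.mp hT
  exact ⟨hne, fun h => hdisj (by rw [h]; exact subset_rfl)⟩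

theorem exists_vdeg_subsetGraph_eq (hm : 2 ≤ m) :
    ∃ S, vdeg (subsetGraph m) S = Fintype.card (ProperSubset m) - 2 := by
  classical
  let a : Fin m := ⟨0, by omega⟩
  let b : Fin m := ⟨1, by omega⟩
  have hba : b ≠ a := by simp [a, b, Fin.ext_iff]
  let s : ProperSubset m := ⟨{a}, Finset.singleton_ne_empty a, fun h =>
    hba (Finset.mem_singleton.mp (h ▸ Finset.mem_univ b))⟩
  refine ⟨s.compl, ?_⟩
  have hadj : ∀ T, (subsetGraph m).Adj s.compl T ↔ T ≠ s.compl ∧ T ≠ s.compl.compl := by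
    intro T
    rw [subsetGraph_adj_iff, s.compl_compl]
    refine and_congr Iff.rfl (not_congr ?_)
    simp [s, ProperSubset.compl, Finset.subset_singleton_iff, T.2.1, Subtype.ext_iff]
  rw [vdeg, Nat.card_congr (Equiv.subtypeEquivRight hadj), Nat.card_eq_fintype_card,
    Fintype.card_subtype_ne_and_ne s.compl.compl_ne.symm]

end subsetGraph

theorem stmt12 (m : ℕ) (hm : 3 ≤ m) :
    edgeChrom (subsetGraph m) = ((maxDeg (subsetGraph m) : ℕ) : ℕ∞) ∧
    maxDeg (subsetGraph m) = 2 ^ m - 4 := by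
  have hpow : 2 ^ m = 2 * 2 ^ (m - 1) := by rw [← pow_succ']; congr; omega
  have hpow_ge : 2 ^ 2 ≤ 2 ^ (m - 1) := Nat.pow_le_pow_right (by norm_num) (by omega)
  have hcard : Fintype.card (ProperSubset m) - 2 = 2 ^ m - 4 := by
    rw [ProperSubset.card_eq (by omega)]; omega
  obtain ⟨S, hS⟩ := exists_vdeg_subsetGraph_eq (by omega : 2 ≤ m)
  have hΔ : maxDeg (subsetGraph m) = 2 ^ m - 4 :=
    hcard ▸ maxDeg_eq_of_forall_le vdeg_subsetGraph_le ⟨S, hS⟩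
  have hcol : (subsetGraph m).lineGraph.Colorable (2 ^ m - 4) := by
    convert SimpleGraph.lineGraph_colorable_of_isContained
      (subsetGraph_isContained_cocktailParty (by omega))
      (cocktailParty.lineGraph_colorable (k := 2 ^ (m - 1) - 1) (by omega)) using 1
    omega
  refine ⟨le_antisymm ?_ ?_, hΔ⟩
  · exact hΔ ▸ hcol.chromaticNumber_le
  · exact hΔ ▸ hcard ▸ hS ▸ vdeg_le_edgeChrom _ S
end

section
/- Let n = p_1^{n_1} ⋯ p_m^{n_m} with m ≥ 2 such that some n_i is odd and some n_j > 1. Then the intersection graph G(Z/nZ) has an even number of vertices and contains a vertex adjacent to all other vertices, and consequently χ′(G(Z/nZ)) = Δ(G(Z/nZ)). -/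
/-!
Ideals of `ZMod n` correspond to divisors of `n`, so there are `∏ (nᵢ + 1)` of them, an even
number as soon as some `nᵢ` is odd; discarding `⊥` and `⊤` keeps the count even.
If `q` is a prime with `q² ∣ n`, the annihilator of `q` is contained in `(q)`, so `(q)` meets
every nonzero ideal and is a universal vertex.
A graph of even order `2s` with a universal vertex has `Δ = 2s - 1`; the edges at that vertex
force `χ' ≥ Δ`, and restricting the round-robin colouring of `K_{2s}` gives `χ' ≤ 2s - 1`.
-/

namespace SimpleGraph

variable {V : Type*} (G : SimpleGraph V)

lemma vdeg_eq_degree (v : V) [Fintype (G.neighborSet v)] : vdeg G v = G.degree v := by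
  rw [vdeg, ← card_neighborSet_eq_degree, ← Nat.card_eq_fintype_card]
  rfl

lemma maxDeg_eq_maxDegree [Fintype V] [DecidableRel G.Adj] : maxDeg G = G.maxDegree := by
  have hbdd : BddAbove (Set.range (vdeg G)) := (Set.finite_range _).bddAbove
  refine le_antisymm (ciSup_le' fun v => ?_) (G.maxDegree_le_of_forall_degree_le _ fun v => ?_)
  · rw [vdeg_eq_degree]
    exact G.degree_le_maxDegree v
  · rw [← vdeg_eq_degree]
    exact le_ciSup hbdd v

lemma degree_le_lineGraph_chromaticNumber (v : V) [Fintype (G.neighborSet v)] :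
    (G.degree v : ℕ∞) ≤ G.lineGraph.chromaticNumber := by
  refine le_chromaticNumber_of_pairwise_adj
    (by rw [← card_neighborSet_eq_degree, Nat.card_eq_fintype_card])
    (fun w : G.neighborSet v => (⟨s(v, w), w.2⟩ : G.edgeSet)) fun w w' hww' => ?_
  refine lineGraph_adj_iff_exists.2
    ⟨fun h => hww' ?_, v, Sym2.mem_mk_left _ _, Sym2.mem_mk_left _ _⟩
  exact Subtype.ext (Sym2.congr_right.1 (congrArg Subtype.val h))

/-- The round-robin edge colouring of the complete graph on `K + 1` vertices (`K` odd), with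
`none` as the point at infinity. -/
def roundRobin {K : ℕ} : Option (ZMod K) → Option (ZMod K) → ZMod K
  | some a, some b => a + b
  | some a, none | none, some a => 2 * a
  | none, none => 0

lemma roundRobin_comm {K : ℕ} (x y : Option (ZMod K)) : roundRobin x y = roundRobin y x := by
  cases x <;> cases y <;> simp only [roundRobin, add_comm]

lemma roundRobin_injective {K : ℕ} (hK : Odd K) {x y z : Option (ZMod K)} (hy : x ≠ y)
    (hz : x ≠ z) (h : roundRobin x y = roundRobin x z) : y = z := by
  have h2 : IsUnit (2 : ZMod K) := by
    simpa using (ZMod.isUnit_iff_coprime 2 K).2 (Nat.coprime_two_left.2 hK)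
  rcases x with _ | a <;> rcases y with _ | b <;> rcases z with _ | c <;>
    simp only [roundRobin, reduceCtorEq, Option.some.injEq, ne_eq, not_true_eq_false] at h hy hz ⊢
  · exact h2.mul_left_cancel h
  · exact hz (by linear_combination h)
  · exact hy (by linear_combination -h)
  · exact add_left_cancel h

lemma lineGraph_colorable_of_equiv {K : ℕ} (hK : Odd K) (σ : V ≃ Option (ZMod K)) :
    G.lineGraph.Colorable K := by
  have : NeZero K := ⟨hK.pos.ne'⟩
  let color : G.edgeSet → ZMod K := fun e =>
    Sym2.lift ⟨fun a b => roundRobin (σ a) (σ b), fun a b => roundRobin_comm _ _⟩ e.1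
  refine ZMod.card K ▸ (Coloring.mk color ?_).colorable
  rintro ⟨e, he⟩ ⟨e', he'⟩ hee'
  obtain ⟨hne, v, hv, hv'⟩ := lineGraph_adj_iff_exists.1 hee'
  obtain ⟨w, rfl⟩ := Sym2.mem_iff_exists.1 hv
  obtain ⟨w', rfl⟩ := Sym2.mem_iff_exists.1 hv'
  intro h
  refine hne (Subtype.ext (congrArg (s(v, ·)) (σ.injective (roundRobin_injective hK ?_ ?_ h))))
  · exact σ.injective.ne (G.ne_of_adj he)
  · exact σ.injective.ne (G.ne_of_adj he')

lemma lineGraph_colorable_card_sub_one [Fintype V] (hV : Even (Fintype.card V)) :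
    G.lineGraph.Colorable (Fintype.card V - 1) := by
  rcases isEmpty_or_nonempty V with _ | _
  · have : IsEmpty G.edgeSet := ⟨fun e => Sym2.ind (fun a _ => isEmptyElim a) e.1⟩
    exact Colorable.of_isEmpty _
  have hK : Odd (Fintype.card V - 1) := Nat.Even.sub_odd Fintype.card_pos hV odd_one
  have : NeZero (Fintype.card V - 1) := ⟨hK.pos.ne'⟩
  exact G.lineGraph_colorable_of_equiv hK
    (Fintype.equivOfCardEq (by simp [Nat.sub_add_cancel Fintype.card_pos]))

theorem lineGraph_chromaticNumber_eq_maxDegree [Fintype V] [DecidableRel G.Adj]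
    (hV : Even (Fintype.card V)) {v : V} (hv : G.IsUniversal v) :
    G.lineGraph.chromaticNumber = G.maxDegree := by
  have : Nonempty V := ⟨v⟩
  have hdeg : G.degree v = G.maxDegree :=
    le_antisymm (G.degree_le_maxDegree v)
      ((G.degree_eq_card_sub_one v).2 hv ▸ Nat.le_sub_one_of_lt G.maxDegree_lt_card_verts)
  refine le_antisymm ?_ (hdeg ▸ G.degree_le_lineGraph_chromaticNumber v)
  rw [← hdeg, (G.degree_eq_card_sub_one v).2 hv]
  exact (G.lineGraph_colorable_card_sub_one hV).chromaticNumber_le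

end SimpleGraph

namespace Ideal
variable {R : Type*} [CommRing R]

theorem inf_span_singleton_ne_bot {a : R} (ha : ∀ x, x * a = 0 → a ∣ x) {I : Ideal R}
    (hI : I ≠ ⊥) : I ⊓ span {a} ≠ ⊥ := by
  obtain ⟨x, hxI, hx0⟩ := I.ne_bot_iff.1 hI
  rw [Ne, eq_bot_iff, SetLike.not_le_iff_exists]
  by_cases hxa : x * a = 0
  · exact ⟨x, ⟨hxI, mem_span_singleton.2 (ha x hxa)⟩, by simpa using hx0⟩
  · exact ⟨x * a, ⟨I.mul_mem_right a hxI, mem_span_singleton.2 (dvd_mul_left a x)⟩,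
      by simpa using hxa⟩

theorem card_ne_bot_ne_top_add_two [Nontrivial R] [Finite (Ideal R)] :
    Nat.card {I : Ideal R // I ≠ ⊥ ∧ I ≠ ⊤} + 2 = Nat.card (Ideal R) := by
  classical
  have := Fintype.ofFinite (Ideal R)
  have hcompl : ({I | ¬(I ≠ ⊥ ∧ I ≠ ⊤)} : Finset (Ideal R)) = {⊥, ⊤} := by
    ext I
    simp only [Finset.mem_filter, Finset.mem_univ, true_and, Finset.mem_insert,
      Finset.mem_singleton]
    tauto
  rw [Nat.card_eq_fintype_card, Nat.card_eq_fintype_card, Fintype.card_subtype,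
    ← Finset.card_pair (bot_ne_top (α := Ideal R)), ← hcompl,
    Finset.card_filter_add_card_filter_not, Finset.card_univ]

end Ideal

theorem Nat.even_card_divisors_of_odd_factorization {n p : ℕ} (hp : p ∈ n.primeFactors)
    (hodd : Odd (n.factorization p)) : Even n.divisors.card := by
  rw [Nat.card_divisors ((Nat.mem_primeFactors.1 hp).2.2), even_iff_two_dvd]
  exact (even_iff_two_dvd.1 hodd.add_one).trans (Finset.dvd_prod_of_mem _ hp)

namespace ZMod
variable {n : ℕ}

instance : IsPrincipalIdealRing (ZMod n) :=
  .of_surjective (Int.castRingHom (ZMod n)) ZMod.intCast_surjective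

theorem natCast_dvd_natCast_iff_of_dvd {d e : ℕ} (he : e ∣ n) :
    (e : ZMod n) ∣ (d : ZMod n) ↔ e ∣ d := by
  refine ⟨fun h => ?_, fun h => Nat.cast_dvd_cast h⟩
  have := map_dvd (ZMod.castHom he (ZMod e)) h
  rwa [map_natCast, map_natCast, ZMod.natCast_self, zero_dvd_iff, ZMod.natCast_eq_zero_iff] at this

theorem exists_dvd_span_natCast_eq [NeZero n] (I : Ideal (ZMod n)) :
    ∃ d, d ∣ n ∧ Ideal.span {(d : ZMod n)} = I := by
  obtain ⟨a, rfl⟩ := (IsPrincipalIdealRing.principal I).principal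
  refine ⟨a.val.gcd n, Nat.gcd_dvd_right _ _, le_antisymm ?_ ?_⟩ <;>
    rw [Ideal.span_singleton_le_span_singleton]
  · rw [← mul_inv_eq_gcd]
    exact dvd_mul_right a _
  · conv_rhs => rw [← natCast_zmod_val a]
    exact Nat.cast_dvd_cast (Nat.gcd_dvd_left _ _)

theorem card_ideal [NeZero n] : Nat.card (Ideal (ZMod n)) = n.divisors.card := by
  rw [← Nat.card_eq_finsetCard]
  refine (Nat.card_eq_of_bijective (fun d : n.divisors => Ideal.span {((d : ℕ) : ZMod n)})
    ⟨fun ⟨d, hd⟩ ⟨e, he⟩ h => ?_, fun I => ?_⟩).symm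
  · rw [Nat.mem_divisors] at hd he
    simp only [le_antisymm_iff, Ideal.span_singleton_le_span_singleton,
      natCast_dvd_natCast_iff_of_dvd hd.1, natCast_dvd_natCast_iff_of_dvd he.1] at h
    exact Subtype.ext (Nat.dvd_antisymm h.2 h.1)
  · obtain ⟨d, hd, rfl⟩ := exists_dvd_span_natCast_eq I
    exact ⟨⟨d, Nat.mem_divisors.2 ⟨hd, NeZero.ne n⟩⟩, rfl⟩

theorem natCast_dvd_of_mul_natCast_eq_zero {q : ℕ} (hq : q ≠ 0) (hqn : q ^ 2 ∣ n) {x : ZMod n}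
    (hx : x * q = 0) : (q : ZMod n) ∣ x := by
  obtain ⟨k, rfl⟩ := ZMod.intCast_surjective x
  obtain ⟨m, rfl⟩ := hqn
  have hdvd : ((q ^ 2 * m : ℕ) : ℤ) ∣ k * q :=
    (ZMod.intCast_zmod_eq_zero_iff_dvd _ _).1 (by push_cast; exact hx)
  rw [show ((q ^ 2 * m : ℕ) : ℤ) = q * m * q by push_cast; ring,
    mul_dvd_mul_iff_right (Int.natCast_ne_zero.2 hq)] at hdvd
  have hqk : (q : ℤ) ∣ k := (dvd_mul_right _ _).trans hdvd
  simpa using map_dvd (Int.castRingHom (ZMod (q ^ 2 * m))) hqk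

end ZMod

theorem even_card_interGraph_vertices {n p : ℕ} (hp : p ∈ n.primeFactors)
    (hodd : Odd (n.factorization p)) :
    Even (Nat.card {I : Ideal (ZMod n) // I ≠ ⊥ ∧ I ≠ ⊤}) := by
  have : NeZero n := ⟨(Nat.mem_primeFactors.1 hp).2.2⟩
  have : Nontrivial (ZMod n) := ZMod.nontrivial_iff.2 (Nat.nonempty_primeFactors.1 ⟨p, hp⟩).ne'
  have hcard := Nat.even_card_divisors_of_odd_factorization hp hodd
  rw [← ZMod.card_ideal, ← Ideal.card_ne_bot_ne_top_add_two] at hcard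
  exact (Nat.even_add.1 hcard).2 even_two

theorem exists_isUniversal_interGraph {n q : ℕ} (hq : q.Prime) (hqn : q ^ 2 ∣ n) :
    ∃ u, (interGraph (ZMod n)).IsUniversal u := by
  refine ⟨⟨Ideal.span {(q : ZMod n)}, ?_, ?_⟩, fun J hJ => ⟨hJ, ?_⟩⟩
  · rw [Ne, Ideal.span_singleton_eq_bot, ZMod.natCast_eq_zero_iff]
    intro hnq
    have := (Nat.pow_dvd_pow_iff_le_right hq.one_lt).1
      (hqn.trans (hnq.trans (pow_one q).symm.dvd))
    omega
  · rw [Ne, Ideal.span_singleton_eq_top, ZMod.isUnit_iff_coprime, hq.coprime_iff_not_dvd, not_not]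
    exact (dvd_pow_self q two_ne_zero).trans hqn
  · rw [inf_comm]
    exact Ideal.inf_span_singleton_ne_bot
      (fun _ hx => ZMod.natCast_dvd_of_mul_natCast_eq_zero hq.ne_zero hqn hx) J.2.1

theorem stmt14_general (n : ℕ)
    (hodd : ∃ p ∈ n.primeFactors, Odd (n.factorization p))
    (hbig : ∃ q ∈ n.primeFactors, 1 < n.factorization q) :
    Even (Nat.card {I : Ideal (ZMod n) // I ≠ ⊥ ∧ I ≠ ⊤}) ∧
    (∃ v, ∀ w, w ≠ v → (interGraph (ZMod n)).Adj v w) ∧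
    edgeChrom (interGraph (ZMod n)) = ((maxDeg (interGraph (ZMod n)) : ℕ) : ℕ∞) := by
  classical
  obtain ⟨p, hp, hp_odd⟩ := hodd
  obtain ⟨q, hq, hq_big⟩ := hbig
  have : NeZero n := ⟨(Nat.mem_primeFactors.1 hp).2.2⟩
  have := Fintype.ofFinite {I : Ideal (ZMod n) // I ≠ ⊥ ∧ I ≠ ⊤}
  have heven := even_card_interGraph_vertices hp hp_odd
  obtain ⟨u, hu⟩ := exists_isUniversal_interGraph (Nat.prime_of_mem_primeFactors hq)
    ((pow_dvd_pow q hq_big).trans (Nat.ordProj_dvd n q))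
  refine ⟨heven, ⟨u, fun w hw => hu hw.symm⟩, ?_⟩
  rw [Nat.card_eq_fintype_card] at heven
  rw [edgeChrom, SimpleGraph.maxDeg_eq_maxDegree]
  exact SimpleGraph.lineGraph_chromaticNumber_eq_maxDegree _ heven hu

theorem stmt14 (n : ℕ) (hn : 0 < n) (hm : 2 ≤ n.primeFactors.card)
    (hodd : ∃ p ∈ n.primeFactors, Odd (n.factorization p))
    (hbig : ∃ q ∈ n.primeFactors, 1 < n.factorization q) :
    Even (Nat.card {I : Ideal (ZMod n) // I ≠ ⊥ ∧ I ≠ ⊤}) ∧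
    (∃ v, ∀ w, w ≠ v → (interGraph (ZMod n)).Adj v w) ∧
    edgeChrom (interGraph (ZMod n)) = ((maxDeg (interGraph (ZMod n)) : ℕ) : ℕ∞) :=
  stmt14_general n hodd hbig
end

section
/- In the ring Z/nZ with n = p_1^{n_1} ⋯ p_m^{n_m} and m ≥ 2, an ideal I (viewed via CRT as (I_1,…,I_m)) is adjacent in G(Z/nZ) to every other proper non-trivial ideal if and only if all components I_i are non-zero. -/
namespace ZMod

lemma natCast_gcd_mem_span_natCast (n a : ℕ) :
    ((a.gcd n : ℕ) : ZMod n) ∈ Ideal.span {(a : ZMod n)} := by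
  rw [Ideal.mem_span_singleton']
  refine ⟨(a.gcdA n : ZMod n), ?_⟩
  have h := congrArg (Int.cast : ℤ → ZMod n) (Nat.gcd_eq_gcd_ab a n)
  push_cast at h
  rw [h, natCast_self, zero_mul, add_zero, mul_comm]

lemma natCast_div_ne_zero {n p : ℕ} [NeZero n] (hp : p.Prime) (hpn : p ∣ n) :
    ((n / p : ℕ) : ZMod n) ≠ 0 := by
  have hn : 0 < n := Nat.pos_of_neZero n
  rw [Ne, natCast_eq_zero_iff]
  intro h
  have := Nat.le_of_dvd (Nat.div_pos (Nat.le_of_dvd hn hpn) hp.pos) h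
  exact (Nat.div_lt_self hn hp.one_lt).not_ge this

lemma dvd_of_natCast_div_mem_span {n p q : ℕ} [NeZero n] (hpn : p ∣ n) (hqn : q ∣ n)
    (h : ((n / q : ℕ) : ZMod n) ∈ Ideal.span {((n / p : ℕ) : ZMod n)}) : q ∣ p := by
  have hn : 0 < n := Nat.pos_of_neZero n
  have hq : 0 < q := Nat.pos_of_dvd_of_pos hqn hn
  -- `p` kills `n / p`, hence everything in the ideal it generates
  have hkill : ((n / q * p : ℕ) : ZMod n) = 0 := by
    obtain ⟨c, hc⟩ := Ideal.mem_span_singleton'.mp h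
    rw [Nat.cast_mul, ← hc, mul_assoc, ← Nat.cast_mul, Nat.div_mul_cancel hpn, natCast_self,
      mul_zero]
  rw [natCast_eq_zero_iff] at hkill
  refine Nat.dvd_of_mul_dvd_mul_left (Nat.div_pos (Nat.le_of_dvd hn hqn) hq) ?_
  rwa [Nat.div_mul_cancel hqn]

lemma exists_natCast_div_mem_span {n : ℕ} [NeZero n] {x : ZMod n} (hx : x ≠ 0) :
    ∃ p ∈ n.primeFactors, ((n / p : ℕ) : ZMod n) ∈ Ideal.span {x} := by
  have hn : n ≠ 0 := NeZero.ne n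
  set d := x.val.gcd n
  have hdn : d ∣ n := Nat.gcd_dvd_right _ _
  have hd : d ≠ n := by
    intro h
    apply hx
    rw [← natCast_zmod_val x, natCast_eq_zero_iff, ← Nat.gcd_eq_right_iff_dvd]
    exact h
  have hnd : n / d ≠ 1 := by
    intro h
    exact hd (by rw [← Nat.div_mul_cancel hdn, h, one_mul])
  set p := (n / d).minFac
  have hpnd : p ∣ n / d := Nat.minFac_dvd _
  have hpn : p ∣ n := hpnd.trans (Nat.div_dvd_of_dvd hdn)
  refine ⟨p, Nat.mem_primeFactors.mpr ⟨Nat.minFac_prime hnd, hpn, hn⟩, ?_⟩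
  have hdp : d ∣ n / p := by
    apply Nat.dvd_div_of_mul_dvd
    rw [mul_comm, ← Nat.mul_div_cancel' hdn]
    exact Nat.mul_dvd_mul_left d hpnd
  obtain ⟨k, hk⟩ := hdp
  rw [hk, Nat.cast_mul, ← natCast_zmod_val x]
  exact Ideal.mul_mem_right _ _ (natCast_gcd_mem_span_natCast n x.val)

lemma exists_span_natCast_div_le {n : ℕ} [NeZero n] {J : Ideal (ZMod n)} (hJ : J ≠ ⊥) :
    ∃ p ∈ n.primeFactors, Ideal.span {((n / p : ℕ) : ZMod n)} ≤ J := by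
  obtain ⟨x, hxJ, hx⟩ := Submodule.exists_mem_ne_zero_of_ne_bot hJ
  obtain ⟨p, hp, hmem⟩ := exists_natCast_div_mem_span hx
  exact ⟨p, hp, (Ideal.span_singleton_le_iff_mem J).mpr
    ((Ideal.span_singleton_le_iff_mem J).mpr hxJ hmem)⟩

lemma isAtom_span_natCast_div {n p : ℕ} [NeZero n] (hp : p ∈ n.primeFactors) :
    IsAtom (Ideal.span {((n / p : ℕ) : ZMod n)}) := by
  obtain ⟨hp, hpn, -⟩ := Nat.mem_primeFactors.mp hp
  refine isAtom_iff_le_of_ge.mpr ⟨?_, fun J hJ hJle => ?_⟩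
  · rw [Ne, Ideal.span_singleton_eq_bot]
    exact natCast_div_ne_zero hp hpn
  obtain ⟨q, hq, hqJ⟩ := exists_span_natCast_div_le hJ
  obtain ⟨hq, hqn, -⟩ := Nat.mem_primeFactors.mp hq
  have hqp : q = p := (Nat.prime_dvd_prime_iff_eq hq hp).mp <|
    dvd_of_natCast_div_mem_span hpn hqn (hJle (hqJ (Ideal.mem_span_singleton_self _)))
  rwa [hqp] at hqJ

end ZMod

open ZMod in
theorem stmt17_general (n : ℕ) (hn : 1 < n)
    (I : Ideal (ZMod n)) (hbot : I ≠ ⊥) :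
    (∀ J : Ideal (ZMod n), J ≠ ⊥ → J ≠ ⊤ → J ≠ I → I ⊓ J ≠ ⊥) ↔
      ∀ p ∈ n.primeFactors, I ⊓ Ideal.span {((n / p : ℕ) : ZMod n)} ≠ ⊥ := by
  have : NeZero n := ⟨by omega⟩
  constructor
  · intro h p hp
    by_cases hI : Ideal.span {((n / p : ℕ) : ZMod n)} = I
    · rwa [hI, inf_idem]
    by_cases htop : Ideal.span {((n / p : ℕ) : ZMod n)} = ⊤
    · rwa [htop, inf_top_eq]
    exact h _ (isAtom_span_natCast_div hp).ne_bot htop hI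
  · intro h J hJ _ _ hIJ
    obtain ⟨p, hp, hpJ⟩ := exists_span_natCast_div_le hJ
    have hpI := (isAtom_span_natCast_div hp).not_disjoint_iff_le.mp
      (by rw [disjoint_iff, inf_comm]; exact h p hp)
    exact (isAtom_span_natCast_div hp).ne_bot (le_bot_iff.mp (hIJ ▸ le_inf hpI hpJ))

theorem stmt17 (n : ℕ) (hn : 1 < n) (hm : 2 ≤ n.primeFactors.card)
    (I : Ideal (ZMod n)) (hbot : I ≠ ⊥) (htop : I ≠ ⊤) :
    (∀ J : Ideal (ZMod n), J ≠ ⊥ → J ≠ ⊤ → J ≠ I → I ⊓ J ≠ ⊥) ↔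
      ∀ p ∈ n.primeFactors, I ⊓ Ideal.span {((n / p : ℕ) : ZMod n)} ≠ ⊥ :=
  stmt17_general n hn I hbot
end
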